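/- Let f : ℤ → ℤ be the finitely supported function with support exactly {0, 1} and f(0) ≠ f(1). Then the element (f, 3) of the lamplighter group ℤ ≀ ℤ is not a product of 2 palindromes over the standard generators {a, t}. -/

import Mathlib

/-- A palindromic word over `X`: a finite list of elements of `X ∪ X⁻¹`
that reads the same forwards and backwards. -/
def IsPalindromicWord {G : Type*} [Group G] (X : Set G) (w : List G) : Prop :=
  (∀ g ∈ w, g ∈ X ∨ g⁻¹ ∈ X) ∧ w.reverse = w

/-- `g` is a product (in order) of the evaluations of `n` palindromic words over `X`. -/
def IsProdOfPalindromes {G : Type*} [Group G] (X : Set G) (n : ℕ) (g : G) : Prop :=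
  ∃ ws : List (List G), ws.length = n ∧ (∀ w ∈ ws, IsPalindromicWord X w) ∧
    (ws.map List.prod).prod = g

/-- The shift automorphism of `⨁_ℤ ℤ` (written multiplicatively): `(n • f) x = f (x - n)`. -/
noncomputable def lampShiftAut (n : ℤ) : Multiplicative (ℤ →₀ ℤ) ≃* Multiplicative (ℤ →₀ ℤ) :=
  AddEquiv.toMultiplicative (Finsupp.domCongr (Equiv.addRight n))

lemma lampShiftAut_apply (n : ℤ) (f : Multiplicative (ℤ →₀ ℤ)) (x : ℤ) :
    Multiplicative.toAdd (lampShiftAut n f) x = Multiplicative.toAdd f (x - n) := by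
  simp [lampShiftAut, Finsupp.domCongr_apply, sub_eq_add_neg]

/-- `ℤ` acting on `⨁_ℤ ℤ` by shifts. -/
noncomputable def lampShift : Multiplicative ℤ →* MulAut (Multiplicative (ℤ →₀ ℤ)) where
  toFun n := lampShiftAut n.toAdd
  map_one' := by
    ext1 f
    apply (Multiplicative.toAdd).injective
    ext x
    rw [MulAut.one_apply, lampShiftAut_apply]
    norm_num
  map_mul' m n := by
    ext1 f
    apply (Multiplicative.toAdd).injective
    ext x
    rw [MulAut.mul_apply, lampShiftAut_apply, lampShiftAut_apply, lampShiftAut_apply,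
      toAdd_mul]
    ring_nf

/-- The lamplighter group `ℤ ≀ ℤ = (⨁_ℤ ℤ) ⋊ ℤ`. -/
abbrev Lamplighter := Multiplicative (ℤ →₀ ℤ) ⋊[lampShift] Multiplicative ℤ

/-- The standard generator `a = (Δ₁, 0)` of `ℤ ≀ ℤ`. -/
noncomputable def genA : Lamplighter := ⟨Multiplicative.ofAdd (Finsupp.single 0 1), 1⟩

/-- The standard generator `t = (0, 1)` of `ℤ ≀ ℤ`. -/
noncomputable def genT : Lamplighter := ⟨1, Multiplicative.ofAdd 1⟩

/-!
Reading words backwards is the anti-automorphism `σ (φ, m) = (x ↦ φ (m - x), m)` of `ℤ ≀ ℤ`,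
which fixes `a` and `t`; hence palindromes are `σ`-fixed, and if `g = p * q` is a product of two
palindromes then `σ g = q * p` is conjugate to `g`. Folding lamp configurations modulo `3` turns
conjugation of an element whose `t`-exponent is divisible by `3` into a rotation of `ℤ/3`. For
`g = (f, 3)` the folded configuration of `g` is `f 0 • δ₀ + f 1 • δ₁` and that of `σ g` is
`f 0 • δ₀ + f 1 • δ₂`, and no rotation carries the first to the second.
-/

open Multiplicative Finsupp MulOpposite

section Palindromes

variable {G : Type*} [Group G] {X : Set G}

lemma unop_map_prod_of_isPalindromicWord (σ : G →* Gᵐᵒᵖ) (hX : ∀ x ∈ X, (σ x).unop = x)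
    {w : List G} (hw : IsPalindromicWord X w) : (σ w.prod).unop = w.prod := by
  obtain ⟨hletters, hrev⟩ := hw
  have hfix : ∀ g ∈ w, (unop ∘ σ) g = id g := by
    intro g hg
    rcases hletters g hg with hg | hg
    · exact hX g hg
    · simpa using congrArg (·⁻¹) (hX _ hg)
  rw [unop_map_list_prod, List.map_congr_left hfix, List.map_id, hrev]

lemma IsProdOfPalindromes.isConj_unop_map {g : G} (σ : G →* Gᵐᵒᵖ)
    (hX : ∀ x ∈ X, (σ x).unop = x) (hg : IsProdOfPalindromes X 2 g) :
    IsConj g (σ g).unop := by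
  obtain ⟨ws, hlen, hpal, rfl⟩ := hg
  obtain ⟨v, w, rfl⟩ := List.length_eq_two.mp hlen
  have hv := unop_map_prod_of_isPalindromicWord σ hX (hpal v (by simp))
  have hw := unop_map_prod_of_isPalindromicWord σ hX (hpal w (by simp))
  -- `σ (p * q) = q * p = p⁻¹ * (p * q) * p`
  refine isConj_iff.mpr ⟨v.prod⁻¹, ?_⟩
  simp [hv, hw]

end Palindromes

lemma Finsupp.eq_single_add_single_of_support_eq_pair {α M : Type*} [DecidableEq α]
    [AddCommMonoid M] {f : α →₀ M} {x y : α} (hxy : x ≠ y) (h : f.support = {x, y}) :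
    f = single x (f x) + single y (f y) :=
  calc f = f.sum single := (sum_single f).symm
    _ = single x (f x) + single y (f y) := by rw [Finsupp.sum, h, Finset.sum_pair hxy]

section FoldMod

variable {M : Type*} [AddCommMonoid M]

noncomputable def foldMod (n : ℕ) (φ : ℤ →₀ M) : ZMod n →₀ M :=
  φ.mapDomain (↑)

lemma foldMod_add (n : ℕ) (φ ψ : ℤ →₀ M) : foldMod n (φ + ψ) = foldMod n φ + foldMod n ψ :=
  mapDomain_add

lemma foldMod_single (n : ℕ) (x : ℤ) (b : M) : foldMod n (single x b) = single (x : ZMod n) b :=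
  mapDomain_single

lemma foldMod_mapDomain {n : ℕ} {e : ℤ → ℤ} {e' : ZMod n → ZMod n}
    (he : ∀ x, ((e x : ℤ) : ZMod n) = e' x) (φ : ℤ →₀ M) :
    foldMod n (φ.mapDomain e) = (foldMod n φ).mapDomain e' := by
  simp only [foldMod, ← mapDomain_comp]
  congr 1
  funext x
  exact he x

end FoldMod

lemma toAdd_lampShift (n : Multiplicative ℤ) (f : Multiplicative (ℤ →₀ ℤ)) :
    toAdd (lampShift n f) = (toAdd f).mapDomain (· + toAdd n) := by
  ext x
  rw [show lampShift n f = lampShiftAut (toAdd n) f from rfl, lampShiftAut_apply,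
    ← mapDomain_apply (add_left_injective (toAdd n)), sub_add_cancel]

lemma toAdd_mul_left (g h : Lamplighter) :
    toAdd (g * h).left = toAdd g.left + (toAdd h.left).mapDomain (· + toAdd g.right) := by
  rw [SemidirectProduct.mul_left, toAdd_mul, toAdd_lampShift]

noncomputable def lampRev : Lamplighter →* Lamplighterᵐᵒᵖ where
  toFun g := op ⟨ofAdd ((toAdd g.left).mapDomain (toAdd g.right - ·)), g.right⟩
  map_one' := by simp
  map_mul' g h := by
    apply unop_injective
    ext1
    · apply toAdd.injective
      simp only [unop_op, unop_mul, SemidirectProduct.mul_left, SemidirectProduct.mul_right,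
        toAdd_mul, toAdd_ofAdd, toAdd_lampShift, mapDomain_add, ← mapDomain_comp]
      rw [add_comm]
      congr 2 <;> funext x <;> simp only [Function.comp_apply] <;> ring
    · simp [mul_comm]

lemma toAdd_unop_lampRev_left (g : Lamplighter) :
    toAdd (lampRev g).unop.left = (toAdd g.left).mapDomain (toAdd g.right - ·) :=
  rfl

lemma unop_lampRev_genA : (lampRev genA).unop = genA := by
  ext1 <;> simp [lampRev, genA]

lemma unop_lampRev_genT : (lampRev genT).unop = genT := by
  ext1 <;> simp [lampRev, genT]

/-- Writing `c = (u, s)` and `g = (φ, r)`, the identity `c * g = h * c` reads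
`u + shift_s φ = h.left + shift_r u` on lamp configurations, and folding modulo `n ∣ r` makes
`shift_r u` and `u` cancel. -/
lemma foldMod_left_of_semiconjBy {n : ℕ} {c g h : Lamplighter}
    (hg : ((toAdd g.right : ℤ) : ZMod n) = 0) (hc : SemiconjBy c g h) :
    foldMod n (toAdd h.left) =
      (foldMod n (toAdd g.left)).mapDomain (· + ((toAdd c.right : ℤ) : ZMod n)) := by
  have hright : h.right = g.right := by
    simpa [mul_comm c.right] using (congrArg SemidirectProduct.right hc).symm
  have hleft := congrArg (fun x : Lamplighter => foldMod n (toAdd x.left)) hc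
  simp only [toAdd_mul_left, foldMod_add, hright] at hleft
  rw [foldMod_mapDomain (e' := (· + _)) (fun x => Int.cast_add x _),
    foldMod_mapDomain (e' := (· + _)) (fun x => Int.cast_add x _), hg,
    show (· + 0 : ZMod n → ZMod n) = id from funext add_zero, mapDomain_id] at hleft
  exact add_right_cancel (hleft.symm.trans (add_comm _ _))

theorem not_prod_of_two_palindromes (f : ℤ →₀ ℤ)
    (hsupp : f.support = {0, 1}) (hne : f 0 ≠ f 1) :
    ¬ IsProdOfPalindromes {genA, genT} 2
      (⟨Multiplicative.ofAdd f, Multiplicative.ofAdd 3⟩ : Lamplighter) := by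
  intro hpal
  have hgen : ∀ x ∈ ({genA, genT} : Set Lamplighter), (lampRev x).unop = x := by
    rintro x (rfl | rfl)
    exacts [unop_lampRev_genA, unop_lampRev_genT]
  obtain ⟨c, hc⟩ := hpal.isConj_unop_map lampRev hgen
  have hfold := foldMod_left_of_semiconjBy (n := 3) (by simp; rfl) hc
  have hf0 : f 0 ≠ 0 := by simp [← Finsupp.mem_support_iff, hsupp]
  have hf1 : f 1 ≠ 0 := by simp [← Finsupp.mem_support_iff, hsupp]
  rw [toAdd_unop_lampRev_left, foldMod_mapDomain (e' := (- ·)) (fun x => by simp; decide),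
    Finsupp.eq_single_add_single_of_support_eq_pair (f := f) zero_ne_one hsupp] at hfold
  simp only [toAdd_ofAdd, foldMod_add, foldMod_single, mapDomain_add, mapDomain_single] at hfold
  generalize ((toAdd (c : Lamplighter).right : ℤ) : ZMod 3) = s at hfold
  fin_cases s
  · simpa +decide [single_apply, hf1.symm] using congrArg (· 1) hfold
  · simpa +decide [single_apply, hf0] using congrArg (· 0) hfold
  · simpa +decide [single_apply, hne] using congrArg (· 0) hfold
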